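/- Let A be a finite set, let H ⊆ A × A be the edge set of a directed graph on A, and let C ⊆ H be a maximal child of H. Then for every strongly connected component S of H, the set C ∩ (S × S) is a maximal child of the edge set H ∩ (S × S). -/

import Mathlib

/-- The edge relation of an edge set `E ⊆ A × A`. -/
def EdgeRel {A : Type*} (E : Set (A × A)) : A → A → Prop := fun u v => (u, v) ∈ E

/-- An edge set is acyclic if no vertex has a path of length ≥ 1 back to itself. -/
def AcyclicEdges {A : Type*} (E : Set (A × A)) : Prop :=
  ∀ a : A, ¬ Relation.TransGen (EdgeRel E) a a

/-- Two vertices are strongly connected in `E` if they are equal or there are paths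
of length ≥ 1 both ways. -/
def StronglyConn {A : Type*} (E : Set (A × A)) (u v : A) : Prop :=
  u = v ∨ (Relation.TransGen (EdgeRel E) u v ∧ Relation.TransGen (EdgeRel E) v u)

/-- `S` is a strongly connected component of `E`: an equivalence class of the
strongly-connected relation. -/
def IsSCC {A : Type*} (E : Set (A × A)) (S : Set A) : Prop :=
  ∃ a : A, S = {b : A | StronglyConn E a b}

/-- The bridge edges of `E`: edges whose endpoints are not strongly connected in `E`. -/
def BridgeEdges {A : Type*} (E : Set (A × A)) : Set (A × A) :=
  {e | e ∈ E ∧ ¬ StronglyConn E e.1 e.2}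

/-- `C` is a maximal child of the directed graph with edge set `H`. -/
def MaximalChild {A : Type*} (H C : Set (A × A)) : Prop :=
  C ⊆ H ∧ AcyclicEdges C ∧ ∀ e ∈ H \ C, ¬ AcyclicEdges (C ∪ {e})

/-!
If `e` lies in an SCC `S` of `H` but not in `C`, maximality of `C` gives a `C`-path from the head
of `e` back to its tail. Every vertex of that path is reachable from `S` and reaches `S` within `H`,
so the whole path lies in `C ∩ S ×ˢ S` and closes a cycle with `e` there as well.
-/

open Relation

section

variable {A : Type*}

lemma edgeRel_mono {E F : Set (A × A)} (h : E ⊆ F) : EdgeRel E ≤ EdgeRel F :=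
  fun _ _ he => h he

lemma stronglyConn_iff_reflTransGen {E : Set (A × A)} {u v : A} :
    StronglyConn E u v ↔ ReflTransGen (EdgeRel E) u v ∧ ReflTransGen (EdgeRel E) v u := by
  constructor
  · rintro (rfl | ⟨huv, hvu⟩)
    · exact ⟨.refl, .refl⟩
    · exact ⟨huv.to_reflTransGen, hvu.to_reflTransGen⟩
  · rintro ⟨huv, hvu⟩
    rcases huv.cases_head with rfl | ⟨w, huw, hwv⟩
    · exact Or.inl rfl
    · rcases hvu.cases_head with rfl | ⟨x, hvx, hxu⟩
      · exact Or.inl rfl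
      · exact Or.inr ⟨.head' huw hwv, .head' hvx hxu⟩

lemma AcyclicEdges.mono {E F : Set (A × A)} (hE : AcyclicEdges E) (hFE : F ⊆ E) :
    AcyclicEdges F :=
  fun a ha => hE a (TransGen.mono (edgeRel_mono hFE) _ _ ha)

lemma transGen_union_singleton {C : Set (A × A)} {e : A × A} {x y : A}
    (h : TransGen (EdgeRel (C ∪ {e})) x y) :
    TransGen (EdgeRel C) x y ∨
      (ReflTransGen (EdgeRel C) x e.1 ∧ ReflTransGen (EdgeRel C) e.2 y) := by
  induction h with
  | single h =>
    rcases h with h | rfl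
    · exact Or.inl (.single h)
    · exact Or.inr ⟨.refl, .refl⟩
  | tail _ hstep ih =>
    rcases hstep with h | rfl
    · rcases ih with ih | ⟨hx, hy⟩
      · exact Or.inl (ih.tail h)
      · exact Or.inr ⟨hx, hy.tail h⟩
    · rcases ih with ih | ⟨hx, -⟩
      · exact Or.inr ⟨ih.to_reflTransGen, .refl⟩
      · exact Or.inr ⟨hx, .refl⟩

lemma not_acyclicEdges_union_singleton_iff {C : Set (A × A)} (hC : AcyclicEdges C)
    (e : A × A) : ¬ AcyclicEdges (C ∪ {e}) ↔ ReflTransGen (EdgeRel C) e.2 e.1 := by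
  constructor
  · intro hcyc
    obtain ⟨a, ha⟩ : ∃ a, TransGen (EdgeRel (C ∪ {e})) a a := by
      simpa only [AcyclicEdges, not_forall, not_not] using hcyc
    rcases transGen_union_singleton ha with ha | ⟨hae, hea⟩
    · exact absurd ha (hC a)
    · exact hea.trans hae
  · intro hpath hacy
    have he : EdgeRel (C ∪ {e}) e.1 e.2 := Or.inr rfl
    exact hacy e.1 (.head' he (ReflTransGen.mono (edgeRel_mono Set.subset_union_left) _ _ hpath))

lemma IsSCC.mem_of_reflTransGen {H : Set (A × A)} {S : Set A} (hS : IsSCC H S)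
    {u v w : A} (hu : u ∈ S) (hv : v ∈ S)
    (huw : ReflTransGen (EdgeRel H) u w) (hwv : ReflTransGen (EdgeRel H) w v) : w ∈ S := by
  obtain ⟨a, rfl⟩ := hS
  simp only [Set.mem_ofPred_eq, stronglyConn_iff_reflTransGen] at hu hv ⊢
  exact ⟨hu.1.trans huw, hwv.trans hv.2⟩

lemma IsSCC.reflTransGen_inter {H C : Set (A × A)} {S : Set A} (hS : IsSCC H S)
    (hCH : C ⊆ H) {u v : A} (hu : u ∈ S) (hv : v ∈ S) (huv : ReflTransGen (EdgeRel C) u v) :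
    ReflTransGen (EdgeRel (C ∩ S ×ˢ S)) u v := by
  induction huv using ReflTransGen.head_induction_on with
  | refl => exact .refl
  | head hxw hwv ih =>
    have hw := hS.mem_of_reflTransGen hu hv (.single (hCH hxw))
      (ReflTransGen.mono (edgeRel_mono hCH) _ _ hwv)
    exact .head ⟨hxw, hu, hw⟩ (ih hw)

end

theorem maximalChild_restrict_scc_general {A : Type*}
    (H C : Set (A × A)) (hC : MaximalChild H C) :
    ∀ S : Set A, IsSCC H S → MaximalChild (H ∩ S ×ˢ S) (C ∩ S ×ˢ S) := by
  intro S hS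
  obtain ⟨hCH, hCacy, hmax⟩ := hC
  have hCSacy : AcyclicEdges (C ∩ S ×ˢ S) := hCacy.mono Set.inter_subset_left
  refine ⟨Set.inter_subset_inter_left _ hCH, hCSacy, ?_⟩
  rintro e ⟨⟨heH, heS⟩, heC⟩
  have hpath := (not_acyclicEdges_union_singleton_iff hCacy e).1
    (hmax e ⟨heH, fun h => heC ⟨h, heS⟩⟩)
  exact (not_acyclicEdges_union_singleton_iff hCSacy e).2
    (hS.reflTransGen_inter hCH heS.2 heS.1 hpath)

theorem maximalChild_restrict_scc {A : Type*} [Fintype A]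
    (H C : Set (A × A)) (hC : MaximalChild H C) :
    ∀ S : Set A, IsSCC H S → MaximalChild (H ∩ S ×ˢ S) (C ∩ S ×ˢ S) :=
  maximalChild_restrict_scc_general H C hC
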